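/- arXiv:2108.02715 — 5 statements merged into one kernel-verified Lean document; each statement's English description precedes it below -/
import Mathlib

section
/- For every natural number k ≥ 1, real p ∈ (0,1], and real q ≥ 1, the probability that a binomial B(k,p) random variable X̂ satisfies X̂ ≤ k·p/q is at most (e^{1/q - 1}·q^{1/q})^{p·k}. (Chernoff bound for the under-estimation probability of sampling-based cardinality estimation with replacement.) -/
/-!
Chernoff's method for the lower tail: for `0 < θ ≤ 1` the indicator of `X ≤ a` is dominated by
`θ ^ (X - a)`, whose expectation is `θ ^ (-a)` times the probability generating function
`(p θ + 1 - p) ^ k` of `B(k, p)`. Bounding `1 + p (θ - 1) ≤ exp (p (θ - 1))` and choosing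
`θ = 1 / q`, `a = k p / q` gives the stated bound.
-/

open Classical in
/-- Probability that a binomial B(k,p) random variable satisfies predicate `P`. -/
noncomputable def binomProb (k : ℕ) (p : ℝ) (P : ℕ → Prop) : ℝ :=
  ∑ i ∈ Finset.range (k + 1),
    if P i then (k.choose i : ℝ) * p ^ i * (1 - p) ^ (k - i) else 0

open Real Finset

lemma binomial_pgf {R : Type*} [CommRing R] (k : ℕ) (p θ : R) :
    ∑ i ∈ range (k + 1), θ ^ i * ((k.choose i : R) * p ^ i * (1 - p) ^ (k - i)) =
      (p * θ + (1 - p)) ^ k := by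
  rw [add_pow]
  refine sum_congr rfl fun i _ => ?_
  ring

lemma binomProb_le_rpow_neg_mul_pgf {k : ℕ} {p : ℝ} (hp0 : 0 ≤ p) (hp1 : p ≤ 1) {θ : ℝ}
    (hθ0 : 0 < θ) (hθ1 : θ ≤ 1) (a : ℝ) :
    binomProb k p (fun i => (i : ℝ) ≤ a) ≤ θ ^ (-a) * (p * θ + (1 - p)) ^ k := by
  rw [← binomial_pgf, mul_sum]
  refine sum_le_sum fun i _ => ?_
  have hw : 0 ≤ (k.choose i : ℝ) * p ^ i * (1 - p) ^ (k - i) := by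
    have : 0 ≤ 1 - p := by linarith
    positivity
  split_ifs with hia
  · have htilt : 1 ≤ θ ^ (-a) * θ ^ i := by
      rw [← rpow_natCast, ← rpow_add hθ0]
      exact one_le_rpow_of_pos_of_le_one_of_nonpos hθ0 hθ1 (by linarith)
    nlinarith
  · positivity

lemma pgf_pow_le_exp {p θ : ℝ} (h : 0 ≤ p * θ + (1 - p)) (k : ℕ) :
    (p * θ + (1 - p)) ^ k ≤ exp (k * p * (θ - 1)) := by
  rw [mul_assoc, exp_nat_mul]
  refine pow_le_pow_left₀ h ?_ k
  linarith [add_one_le_exp (p * (θ - 1))]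

theorem chernoff_underestimation_general (k : ℕ) (p : ℝ) (hp0 : 0 < p) (hp1 : p ≤ 1)
    (q : ℝ) (hq : 1 ≤ q) :
    binomProb k p (fun i => (i : ℝ) ≤ k * p / q) ≤
      (Real.exp (1 / q - 1) * q ^ (1 / q)) ^ (p * k) := by
  have hq0 : 0 < q := by linarith
  have hθ0 : 0 < 1 / q := by positivity
  have hθ1 : 1 / q ≤ 1 := (div_le_one hq0).mpr hq
  have hrhs : (exp (1 / q - 1) * q ^ (1 / q)) ^ (p * k) =
      (1 / q) ^ (-(k * p / q)) * exp (k * p * (1 / q - 1)) := by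
    rw [mul_rpow (exp_pos _).le (by positivity), ← exp_mul, ← rpow_mul hq0.le, one_div,
      inv_rpow hq0.le, rpow_neg (by positivity), inv_inv, mul_comm]
    congr 2 <;> ring
  calc binomProb k p (fun i => (i : ℝ) ≤ k * p / q)
      ≤ (1 / q) ^ (-(k * p / q)) * (p * (1 / q) + (1 - p)) ^ k :=
        binomProb_le_rpow_neg_mul_pgf hp0.le hp1 hθ0 hθ1 _
    _ ≤ (1 / q) ^ (-(k * p / q)) * exp (k * p * (1 / q - 1)) := by
        gcongr
        exact pgf_pow_le_exp (by nlinarith) k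
    _ = _ := hrhs.symm

theorem chernoff_underestimation (k : ℕ) (hk : 1 ≤ k) (p : ℝ) (hp0 : 0 < p) (hp1 : p ≤ 1)
    (q : ℝ) (hq : 1 ≤ q) :
    binomProb k p (fun i => (i : ℝ) ≤ k * p / q) ≤
      (Real.exp (1 / q - 1) * q ^ (1 / q)) ^ (p * k) :=
  chernoff_underestimation_general k p hp0 hp1 q hq
end

section
/- For every natural number k ≥ 1, real p ∈ (0,1], and real q ≥ 1, a binomial B(k,p) random variable X̂ satisfies P(k·p/q ≤ X̂ ≤ q·k·p) ≥ 1 − (e^{q-1}/q^q)^{p·k} − (e^{1/q-1}·q^{1/q})^{p·k}. (Bound 1: Q-error bound from the Chernoff bound for uniform sampling with replacement.) -/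
open Real

lemma sum_choose_mul_pow_mul_pow {R : Type*} [CommSemiring R] (x y : R) (k : ℕ) :
    ∑ i ∈ Finset.range (k + 1), (k.choose i : R) * x ^ i * y ^ (k - i) = (x + y) ^ k := by
  rw [add_pow]
  exact Finset.sum_congr rfl fun i _ => by ring

section binomProb

variable {k : ℕ} {p : ℝ}

lemma choose_mul_pow_mul_one_sub_pow_nonneg (hp0 : 0 ≤ p) (hp1 : p ≤ 1) (i : ℕ) :
    0 ≤ (k.choose i : ℝ) * p ^ i * (1 - p) ^ (k - i) := by
  have := sub_nonneg.2 hp1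
  positivity

lemma binomProb_add_binomProb_not (P : ℕ → Prop) :
    binomProb k p P + binomProb k p (fun i => ¬ P i) = 1 := by
  classical
  calc binomProb k p P + binomProb k p (fun i => ¬ P i)
      = ∑ i ∈ Finset.range (k + 1), (k.choose i : ℝ) * p ^ i * (1 - p) ^ (k - i) := by
        rw [binomProb, binomProb, ← Finset.sum_add_distrib]
        refine Finset.sum_congr rfl fun i _ => ?_
        by_cases h : P i <;> simp [h]
    _ = 1 := by rw [sum_choose_mul_pow_mul_pow, add_sub_cancel, one_pow]

lemma binomProb_or_le (hp0 : 0 ≤ p) (hp1 : p ≤ 1) (P Q : ℕ → Prop) :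
    binomProb k p (fun i => P i ∨ Q i) ≤ binomProb k p P + binomProb k p Q := by
  classical
  rw [binomProb, binomProb, binomProb, ← Finset.sum_add_distrib]
  refine Finset.sum_le_sum fun i _ => ?_
  have := choose_mul_pow_mul_one_sub_pow_nonneg (k := k) hp0 hp1 i
  by_cases hP : P i <;> by_cases hQ : Q i <;> simp [hP, hQ, this]

lemma binomProb_le_rpow_neg_mul_pow {r t : ℝ} (hp0 : 0 ≤ p) (hp1 : p ≤ 1) (hr : 0 < r)
    {P : ℕ → Prop} (hP : ∀ i : ℕ, P i → r ^ t ≤ r ^ i) :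
    binomProb k p P ≤ r ^ (-t) * (p * r + (1 - p)) ^ k := by
  classical
  rw [← sum_choose_mul_pow_mul_pow, Finset.mul_sum, binomProb]
  refine Finset.sum_le_sum fun i _ => ?_
  have hterm := choose_mul_pow_mul_one_sub_pow_nonneg (k := k) hp0 hp1 i
  have hweight : r ^ (-t) * ((k.choose i : ℝ) * (p * r) ^ i * (1 - p) ^ (k - i))
      = r ^ (-t) * r ^ i * ((k.choose i : ℝ) * p ^ i * (1 - p) ^ (k - i)) := by
    rw [mul_pow]; ring
  rw [hweight]
  split_ifs with hPi
  · have hone : 1 ≤ r ^ (-t) * r ^ i := by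
      rw [rpow_neg hr.le, inv_mul_eq_div, le_div_iff₀ (rpow_pos_of_pos hr t), one_mul]
      exact hP i hPi
    nlinarith
  · have := rpow_pos_of_pos hr (-t)
    positivity

lemma binomProb_le_chernoff {r c : ℝ} (hp0 : 0 ≤ p) (hp1 : p ≤ 1) (hr : 0 < r)
    {P : ℕ → Prop} (hP : ∀ i : ℕ, P i → r ^ (c * (p * k)) ≤ r ^ i) :
    binomProb k p P ≤ (exp (r - 1) * r ^ (-c)) ^ (p * k) := by
  have hmgf : p * r + (1 - p) ≤ exp (p * (r - 1)) := by
    linarith [add_one_le_exp (p * (r - 1))]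
  calc binomProb k p P
      ≤ r ^ (-(c * (p * k))) * (p * r + (1 - p)) ^ k :=
        binomProb_le_rpow_neg_mul_pow hp0 hp1 hr hP
    _ ≤ r ^ (-(c * (p * k))) * exp (p * (r - 1)) ^ k := by
        gcongr
    _ = (exp (r - 1) * r ^ (-c)) ^ (p * k) := by
        rw [mul_rpow (exp_pos _).le (rpow_nonneg hr.le _), ← exp_mul, ← rpow_mul hr.le,
          ← exp_nat_mul, neg_mul, mul_comm]
        ring_nf

lemma binomProb_upper_tail_le {q : ℝ} (hp0 : 0 ≤ p) (hp1 : p ≤ 1) (hq : 1 ≤ q) :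
    binomProb k p (fun i => q * k * p < i) ≤ (exp (q - 1) / q ^ q) ^ (p * k) := by
  have hq0 : 0 < q := one_pos.trans_le hq
  rw [div_eq_mul_inv, ← rpow_neg hq0.le]
  refine binomProb_le_chernoff hp0 hp1 hq0 fun i hi => ?_
  rw [← rpow_natCast]
  exact rpow_le_rpow_of_exponent_le hq (by linarith)

lemma binomProb_lower_tail_le {q : ℝ} (hp0 : 0 ≤ p) (hp1 : p ≤ 1) (hq : 1 ≤ q) :
    binomProb k p (fun i => i < k * p / q) ≤ (exp (1 / q - 1) * q ^ (1 / q)) ^ (p * k) := by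
  have hq0 : 0 < q := one_pos.trans_le hq
  have hinv : q ^ (1 / q) = (1 / q) ^ (-(1 / q)) := by
    rw [rpow_neg (by positivity), one_div, inv_rpow hq0.le, inv_inv]
  rw [hinv]
  refine binomProb_le_chernoff hp0 hp1 (by positivity) fun i hi => ?_
  rw [← rpow_natCast]
  refine rpow_le_rpow_of_exponent_ge (by positivity) (div_le_one_of_le₀ hq hq0.le) ?_
  rw [lt_div_iff₀ hq0] at hi
  rw [one_div_mul_eq_div, le_div_iff₀ hq0]
  linarith

end binomProb

theorem qerror_bound_chernoff_general (k : ℕ) (p : ℝ) (hp0 : 0 < p) (hp1 : p ≤ 1)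
    (q : ℝ) (hq : 1 ≤ q) :
    1 - (Real.exp (q - 1) / q ^ q) ^ (p * k)
      - (Real.exp (1 / q - 1) * q ^ (1 / q)) ^ (p * k) ≤
    binomProb k p (fun i => k * p / q ≤ (i : ℝ) ∧ (i : ℝ) ≤ q * k * p) := by
  have hcompl := binomProb_add_binomProb_not (k := k) (p := p)
    (fun i => k * p / q ≤ (i : ℝ) ∧ (i : ℝ) ≤ q * k * p)
  have hunion := binomProb_or_le (k := k) hp0.le hp1
    (fun i => (i : ℝ) < k * p / q) (fun i => q * k * p < (i : ℝ))
  simp only [not_and_or, not_le] at hcompl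
  linarith [binomProb_upper_tail_le (k := k) hp0.le hp1 hq,
    binomProb_lower_tail_le (k := k) hp0.le hp1 hq]

theorem qerror_bound_chernoff (k : ℕ) (hk : 1 ≤ k) (p : ℝ) (hp0 : 0 < p) (hp1 : p ≤ 1)
    (q : ℝ) (hq : 1 ≤ q) :
    1 - (Real.exp (q - 1) / q ^ q) ^ (p * k)
      - (Real.exp (1 / q - 1) * q ^ (1 / q)) ^ (p * k) ≤
    binomProb k p (fun i => k * p / q ≤ (i : ℝ) ∧ (i : ℝ) ≤ q * k * p) :=
  qerror_bound_chernoff_general k p hp0 hp1 q hq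
end

section
/- For every natural number k ≥ 1, real p ∈ (0,1], and real q > 1, the probability that a binomial B(k,p) random variable X̂ satisfies X̂ > k·p·q is at most exp(−k·(pq−p)² / (2σ² + 2(pq−p)/3)), where σ² = p(1−p). (Bernstein bound for the over-estimation probability of sampling with replacement.) -/
open Real

lemma nonneg_of_hasDerivAt_of_nonneg {F F' : ℝ → ℝ} (hF : ∀ x, HasDerivAt F (F' x) x)
    (hF0 : F 0 = 0) (hF' : ∀ x, 0 ≤ x → 0 ≤ F' x) {t : ℝ} (ht : 0 ≤ t) : 0 ≤ F t := by
  have hmono : MonotoneOn F (Set.Ici 0) :=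
    monotoneOn_of_hasDerivWithinAt_nonneg (convex_Ici 0)
      (fun x _ => (hF x).continuousAt.continuousWithinAt)
      (fun x _ => (hF x).hasDerivWithinAt)
      (fun x hx => hF' x (interior_subset hx))
  simpa [hF0] using hmono Set.self_mem_Ici (Set.mem_Ici.2 ht) ht

lemma exp_sub_one_mul_two_sub_le {t : ℝ} (ht : 0 ≤ t) : (exp t - 1) * (2 - t) ≤ 2 * t := by
  have key : 0 ≤ 2 * t - (exp t - 1) * (2 - t) := by
    refine nonneg_of_hasDerivAt_of_nonneg (F := fun x => 2 * x - (exp x - 1) * (2 - x))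
      (F' := fun x => 1 - (1 - x) * exp x) (fun x => ?_) (by simp) (fun x _ => ?_) ht
    · exact (((hasDerivAt_id' x).const_mul 2).fun_sub (((hasDerivAt_exp x).sub_const 1).fun_mul
        ((hasDerivAt_id' x).const_sub 2))).congr_deriv (by ring)
    · have h := mul_le_mul_of_nonneg_right (add_one_le_exp (-x)) (exp_pos x).le
      rw [← exp_add, neg_add_cancel, exp_zero] at h
      linarith
  linarith

lemma exp_sub_one_sub_mul_three_sub_le {t : ℝ} (ht : 0 ≤ t) :
    (exp t - 1 - t) * (3 - t) ≤ 3 * t ^ 2 / 2 := by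
  have key : 0 ≤ 3 * t ^ 2 / 2 - (exp t - 1 - t) * (3 - t) := by
    refine nonneg_of_hasDerivAt_of_nonneg
      (F := fun x => 3 * x ^ 2 / 2 - (exp x - 1 - x) * (3 - x))
      (F' := fun x => 2 * x - (exp x - 1) * (2 - x)) (fun x => ?_) (by simp) (fun x hx => ?_) ht
    · exact ((((hasDerivAt_pow 2 x).const_mul 3).div_const 2).fun_sub
        ((((hasDerivAt_exp x).sub_const 1).fun_sub (hasDerivAt_id' x)).fun_mul
          ((hasDerivAt_id' x).const_sub 3))).congr_deriv (by push_cast; ring)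
    · linarith [exp_sub_one_mul_two_sub_le hx]
  linarith

lemma exp_sub_one_sub_le {t : ℝ} (ht0 : 0 ≤ t) (ht3 : t < 3) :
    exp t - 1 - t ≤ t ^ 2 / (2 * (1 - t / 3)) := by
  rw [le_div_iff₀ (by linarith)]
  linarith [exp_sub_one_sub_mul_three_sub_le ht0]

lemma bernoulli_centered_mgf_le {p t : ℝ} (hp0 : 0 ≤ p) (hp1 : p ≤ 1) (ht : 0 ≤ t) :
    (1 - p) * exp (-p * t) + p * exp ((1 - p) * t) ≤ 1 + p * (1 - p) * (exp t - 1 - t) := by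
  have hexp (c x : ℝ) : HasDerivAt (fun y => exp (c * y)) (exp (c * x) * c) x :=
    ((hasDerivAt_id' x).const_mul c).exp.congr_deriv (by ring)
  have key : 0 ≤ 1 + p * (1 - p) * (exp t - 1 - t)
      - ((1 - p) * exp (-p * t) + p * exp ((1 - p) * t)) := by
    refine nonneg_of_hasDerivAt_of_nonneg
      (F := fun x => 1 + p * (1 - p) * (exp x - 1 - x)
        - ((1 - p) * exp (-p * x) + p * exp ((1 - p) * x)))
      (F' := fun x => p * (1 - p) * (exp x - 1 + exp (-p * x) - exp ((1 - p) * x)))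
      (fun x => ?_) (by simp) (fun x hx => ?_) ht
    · exact (((((hasDerivAt_exp x).sub_const 1).fun_sub (hasDerivAt_id' x)).const_mul
        (p * (1 - p))).const_add 1 |>.fun_sub
        (((hexp (-p) x).const_mul (1 - p)).fun_add ((hexp (1 - p) x).const_mul p))).congr_deriv
          (by ring)
    -- `exp x - 1 + exp (-p x) - exp ((1 - p) x) = (exp ((1 - p) x) - exp (-p x)) (exp (p x) - 1)`
    · have h1 : exp (-p * x) * exp (p * x) = 1 := by rw [← exp_add]; simp
      have h2 : exp ((1 - p) * x) * exp (p * x) = exp x := by rw [← exp_add]; ring_nf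
      have hfactor : 0 ≤ (exp ((1 - p) * x) - exp (-p * x)) * (exp (p * x) - 1) :=
        mul_nonneg (sub_nonneg.2 (exp_le_exp.2 (by nlinarith)))
          (sub_nonneg.2 (one_le_exp (by positivity)))
      have hσ : 0 ≤ p * (1 - p) := mul_nonneg hp0 (by linarith)
      exact mul_nonneg hσ (by linarith)
  linarith

lemma bernoulli_mgf_le {p t : ℝ} (hp0 : 0 ≤ p) (hp1 : p ≤ 1) (ht : 0 ≤ t) :
    p * exp t + (1 - p) ≤ exp (p * t + p * (1 - p) * (exp t - 1 - t)) := by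
  have h1 : exp (-p * t) * exp (p * t) = 1 := by rw [← exp_add]; simp
  have h2 : exp ((1 - p) * t) * exp (p * t) = exp t := by rw [← exp_add]; ring_nf
  calc p * exp t + (1 - p)
      = ((1 - p) * exp (-p * t) + p * exp ((1 - p) * t)) * exp (p * t) := by
        linear_combination (-(1 - p)) * h1 - p * h2
    _ ≤ (1 + p * (1 - p) * (exp t - 1 - t)) * exp (p * t) := by
        gcongr ?_ * _
        exact bernoulli_centered_mgf_le hp0 hp1 ht
    _ ≤ exp (p * (1 - p) * (exp t - 1 - t)) * exp (p * t) := by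
        gcongr; linarith [add_one_le_exp (p * (1 - p) * (exp t - 1 - t))]
    _ = exp (p * t + p * (1 - p) * (exp t - 1 - t)) := by rw [← exp_add, add_comm]

lemma binomProb_eq_zero {k : ℕ} {p : ℝ} {P : ℕ → Prop} (hP : ∀ i ≤ k, ¬ P i) :
    binomProb k p P = 0 :=
  Finset.sum_eq_zero fun i hi => if_neg (hP i (Finset.mem_range_succ_iff.1 hi))

lemma binomProb_lt_le_exp_mul (k : ℕ) {p t : ℝ} (a : ℝ) (hp0 : 0 ≤ p) (hp1 : p ≤ 1)
    (ht : 0 ≤ t) :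
    binomProb k p (fun i => a < i) ≤ exp (-(t * a)) * (p * exp t + (1 - p)) ^ k := by
  have hp1' : 0 ≤ 1 - p := by linarith
  calc binomProb k p (fun i => a < i)
      ≤ ∑ i ∈ Finset.range (k + 1),
          exp (t * i - t * a) * ((k.choose i : ℝ) * p ^ i * (1 - p) ^ (k - i)) := by
        refine Finset.sum_le_sum fun i _ => ?_
        split_ifs with hi
        · exact le_mul_of_one_le_left (by positivity) (one_le_exp (by nlinarith))
        · positivity
    _ = exp (-(t * a)) * (p * exp t + (1 - p)) ^ k := by
        rw [add_pow, Finset.mul_sum]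
        refine Finset.sum_congr rfl fun i _ => ?_
        rw [show t * i - t * a = -(t * a) + i * t by ring, exp_add, exp_nat_mul, mul_pow]
        ring

lemma binomProb_gt_le_bernstein (k : ℕ) {p ε : ℝ} (hp0 : 0 < p) (hp1 : p < 1) (hε : 0 ≤ ε) :
    binomProb k p (fun i => k * (p + ε) < i) ≤
      exp (-(k * ε ^ 2) / (2 * (p * (1 - p)) + 2 * ε / 3)) := by
  set σ2 := p * (1 - p)
  have hσ2 : 0 < σ2 := mul_pos hp0 (by linarith)
  set t := ε / (σ2 + ε / 3) with ht
  have ht0 : 0 ≤ t := by positivity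
  have ht3 : t < 3 := by rw [ht, div_lt_iff₀ (by positivity)]; linarith
  calc binomProb k p (fun i => k * (p + ε) < i)
      ≤ exp (-(t * (k * (p + ε)))) * (p * exp t + (1 - p)) ^ k :=
        binomProb_lt_le_exp_mul k _ hp0.le hp1.le ht0
    _ ≤ exp (-(t * (k * (p + ε)))) * exp (p * t + σ2 * (exp t - 1 - t)) ^ k := by
        gcongr
        exact bernoulli_mgf_le hp0.le hp1.le ht0
    _ = exp (k * (σ2 * (exp t - 1 - t) - t * ε)) := by
        rw [← exp_nat_mul, ← exp_add]; ring_nf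
    _ ≤ exp (k * (σ2 * (t ^ 2 / (2 * (1 - t / 3))) - t * ε)) := by
        gcongr; exact exp_sub_one_sub_le ht0 ht3
    _ = exp (-(k * ε ^ 2) / (2 * σ2 + 2 * ε / 3)) := by
        congr 1
        rw [ht]
        field_simp
        ring

theorem bernstein_overestimation_general (k : ℕ) (p : ℝ) (hp0 : 0 < p) (hp1 : p ≤ 1)
    (q : ℝ) (hq : 1 < q) :
    binomProb k p (fun i => (k : ℝ) * p * q < (i : ℝ)) ≤
      Real.exp (-(k * (p * q - p) ^ 2) / (2 * (p * (1 - p)) + 2 * (p * q - p) / 3)) := by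
  rcases hp1.lt_or_eq with hp1 | rfl
  · have hε : 0 ≤ p * q - p := by nlinarith
    simpa only [show (k : ℝ) * p * q = k * (p + (p * q - p)) by ring]
      using binomProb_gt_le_bernstein k hp0 hp1 hε
  · rw [binomProb_eq_zero fun i hi => ?_]
    · positivity
    · have : (i : ℝ) ≤ k := by exact_mod_cast hi
      have : (k : ℝ) ≤ k * q := le_mul_of_one_le_right k.cast_nonneg hq.le
      simp only [mul_one, not_lt]
      linarith

theorem bernstein_overestimation (k : ℕ) (hk : 1 ≤ k) (p : ℝ) (hp0 : 0 < p) (hp1 : p ≤ 1)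
    (q : ℝ) (hq : 1 < q) :
    binomProb k p (fun i => (k : ℝ) * p * q < (i : ℝ)) ≤
      Real.exp (-(k * (p * q - p) ^ 2) / (2 * (p * (1 - p)) + 2 * (p * q - p) / 3)) :=
  bernstein_overestimation_general k p hp0 hp1 q hq
end

section
/- For every population of n ≥ 2 rows of which m satisfy a predicate (0 < m ≤ n, p = m/n), every sample size 1 ≤ k < n, and every real q ≥ 1, the hypergeometric random variable X̂ counting satisfying rows among k rows drawn uniformly without replacement satisfies P(X̂ > k·p·q) ≤ exp(−2k·(pq−p)²/ρ). (Hoeffding–Serfling bound for the over-estimation probability of sampling without replacement.) -/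
open Classical in
/-- Probability that a hypergeometric random variable (number of "satisfying" rows among
`k` rows drawn uniformly at random without replacement from `n` rows of which `m` satisfy
the predicate) satisfies `P`. -/
noncomputable def hyperProb (n m k : ℕ) (P : ℕ → Prop) : ℝ :=
  ∑ i ∈ Finset.range (k + 1),
    if P i then ((m.choose i : ℝ) * ((n - m).choose (k - i) : ℝ)) / (n.choose k : ℝ) else 0

open Classical in
/-- The factor ρ from the Hoeffding–Serfling/Bernstein–Serfling inequalities. -/
noncomputable def rho (n k : ℕ) : ℝ :=
  if (k : ℝ) ≤ (n : ℝ) / 2 then 1 - ((k : ℝ) - 1) / n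
  else (1 - (k : ℝ) / n) * (1 + 1 / (k : ℝ))

open Classical in
/-- The factor ζ from the Bernstein–Serfling inequality. -/
noncomputable def zeta (n k : ℕ) : ℝ :=
  if (k : ℝ) ≤ (n : ℝ) / 2 then
    4 / 3 + Real.sqrt ((k * ((k : ℝ) - 1)) / (n * ((n : ℝ) - k + 1)))
  else
    4 / 3 + Real.sqrt ((((n : ℝ) - k - 1) * ((n : ℝ) - k)) / (((k : ℝ) + 1) * n))

/-!
Serfling's argument. Draw the rows one at a time; the proportion `R_j` of satisfying rows among
the `n - j` rows not yet drawn is a martingale, and its `j`-th step moves within an interval of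
length `1 / (n - j - 1)`. Hoeffding's lemma for each step gives `E exp (λ (R_k - p)) ≤
exp (λ² σ_k / 8)` with `σ_k = ∑_{j<k} (n - j - 1)⁻² ≤ k (n - k + 1) / (n (n - k)²)`, and since
`X̂ - k p = (n - k) (p - R_k)`, a Chernoff bound yields the first form of `ρ`. For the second form
apply the same bound to the `n - k` rows left out of the sample: once they are drawn, the
remaining proportion is `X̂ / k`.
-/

open Real Finset MeasureTheory ProbabilityTheory

theorem hoeffding_lemma_two_point {θ : ℝ} (h0 : 0 ≤ θ) (h1 : θ ≤ 1) (u v : ℝ) :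
    θ * exp u + (1 - θ) * exp v ≤ exp (θ * u + (1 - θ) * v + (u - v) ^ 2 / 8) := by
  set μ : Measure ℝ := bernoulliMeasure u v ⟨θ, h0, h1⟩
  have hb : ∀ᵐ ω ∂μ, ω ∈ Set.Icc (min v u) (max v u) := by
    rw [ae_iff]
    simp [μ, bernoulliMeasure_def]
  have h := (hasSubgaussianMGF_of_mem_Icc aemeasurable_id hb).mgf_le 1
  simp only [mgf, integral_bernoulliMeasure, μ, id, smul_eq_mul, one_mul, one_pow, mul_one,
    max_sub_min_eq_abs', NNReal.coe_pow, NNReal.coe_div, coe_nnnorm, norm_eq_abs,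
    exp_sub, abs_abs, div_pow, sq_abs, NNReal.coe_ofNat] at h
  rw [exp_add, ← div_le_iff₀' (exp_pos _), add_div, mul_div_assoc, mul_div_assoc]
  refine h.trans_eq (congrArg exp ?_)
  ring

theorem Nat.cast_choose_succ_mul (a s : ℕ) :
    (a.choose (s + 1) : ℝ) * (s + 1) = a.choose s * (a - s) := by
  rcases le_or_gt s a with h | h
  · have := congrArg (Nat.cast : ℕ → ℝ) (Nat.choose_succ_right_eq a s)
    push_cast [Nat.cast_sub h] at this
    exact this
  · simp [Nat.choose_eq_zero_of_lt h, Nat.choose_eq_zero_of_lt (h.trans s.lt_succ_self)]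

theorem succ_mul_sum_antidiagonal_choose_mul_choose (m m' k : ℕ) (g : ℕ × ℕ → ℝ) :
    (k + 1) * ∑ x ∈ antidiagonal (k + 1), (m.choose x.1 * m'.choose x.2 : ℝ) * g x =
      ∑ x ∈ antidiagonal k, (m.choose x.1 * m'.choose x.2 : ℝ) *
        ((m - x.1) * g (x.1 + 1, x.2) + (m' - x.2) * g (x.1, x.2 + 1)) := by
  have hsplit : ∀ x ∈ antidiagonal (k + 1),
      ((k : ℝ) + 1) * ((m.choose x.1 * m'.choose x.2) * g x) =
        x.1 * m.choose x.1 * m'.choose x.2 * g x + x.2 * m.choose x.1 * m'.choose x.2 * g x := by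
    intro x hx
    have hx' : ((k : ℝ) + 1) = x.1 + x.2 := by
      exact_mod_cast (HasAntidiagonal.mem_antidiagonal.1 hx).symm
    rw [hx']
    ring
  simp only [mul_sum, sum_congr rfl hsplit, sum_add_distrib, mul_add]
  rw [Nat.sum_antidiagonal_succ, Nat.sum_antidiagonal_succ']
  simp only [CharP.cast_eq_zero, zero_mul, zero_add, Nat.cast_add, Nat.cast_one]
  congr 1 <;> refine sum_congr rfl fun x _ => ?_
  · linear_combination (m'.choose x.2 * g (x.1 + 1, x.2)) * Nat.cast_choose_succ_mul m x.1
  · linear_combination (m.choose x.1 * g (x.1, x.2 + 1)) * Nat.cast_choose_succ_mul m' x.2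

theorem le_of_choose_mul_choose_mul_ne_zero {m m' : ℕ} {x : ℕ × ℕ} {c : ℝ}
    (h : (m.choose x.1 * m'.choose x.2 : ℝ) * c ≠ 0) : x.1 ≤ m ∧ x.2 ≤ m' := by
  simp only [ne_eq, mul_eq_zero, Nat.cast_eq_zero, Nat.choose_eq_zero_iff, not_or, not_lt] at h
  exact h.1

theorem choose_mul_choose_compl {m m' : ℕ} {x : ℕ × ℕ} (h : x.1 ≤ m ∧ x.2 ≤ m')
    (g : ℕ × ℕ → ℝ) :
    (m.choose x.1 * m'.choose x.2 : ℝ) * g x =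
      (m.choose (m - x.1) * m'.choose (m' - x.2) : ℝ) * g (m - (m - x.1), m' - (m' - x.2)) := by
  rw [Nat.choose_symm h.1, Nat.choose_symm h.2, Nat.sub_sub_self h.1, Nat.sub_sub_self h.2]

/-- An upper bound for `∑ j ∈ range k, (n - j - 1)⁻²`, the sum of the squared ranges of the
first `k` steps of Serfling's martingale. -/
noncomputable def serflingBound (n k : ℕ) : ℝ := k * (n - k + 1) / (n * (n - k) ^ 2)

theorem serflingBound_add_inv_sq_le {n k : ℕ} (h : k + 1 < n) :
    serflingBound n k + ((n : ℝ) - k - 1)⁻¹ ^ 2 ≤ serflingBound n (k + 1) := by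
  have h' : (k : ℝ) + 1 < n := by exact_mod_cast h
  have h1 : 0 < (n : ℝ) - k - 1 := by linarith
  have h2 : (n : ℝ) - k ≠ 0 := by linarith
  have h3 : (n : ℝ) - (k + 1) ≠ 0 := by linarith
  have hn : (n : ℝ) ≠ 0 := by linarith
  have hgap : serflingBound n (k + 1) - (serflingBound n k + ((n : ℝ) - k - 1)⁻¹ ^ 2) =
      k / (n * ((n : ℝ) - k) ^ 2 * ((n : ℝ) - k - 1)) := by
    unfold serflingBound
    push_cast
    field_simp
    ring
  rw [← sub_nonneg, hgap]
  positivity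

/-- The expectation of `g (a, b)`, where `a` and `b` count the satisfying and the other rows among
`k` rows drawn without replacement from `m` satisfying and `m'` other rows. -/
noncomputable def hypergeomExpectation (m m' k : ℕ) (g : ℕ × ℕ → ℝ) : ℝ :=
  (∑ x ∈ antidiagonal k, (m.choose x.1 * m'.choose x.2 : ℝ) * g x) / (m + m').choose k

noncomputable def remainingFraction (m m' : ℕ) (x : ℕ × ℕ) : ℝ :=
  ((m : ℝ) - x.1) / (((m : ℝ) - x.1) + ((m' : ℝ) - x.2))

section remainingFraction

variable {m m' k : ℕ} {x : ℕ × ℕ}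

theorem remainingFraction_of_mem_antidiagonal (hx : x ∈ antidiagonal k) :
    remainingFraction m m' x = ((m : ℝ) - x.1) / ((m : ℝ) + m' - k) := by
  rw [remainingFraction, ← HasAntidiagonal.mem_antidiagonal.1 hx]
  push_cast
  ring_nf

theorem remainingFraction_mem_Icc (hx : x.1 ≤ m ∧ x.2 ≤ m') :
    remainingFraction m m' x ∈ Set.Icc 0 1 := by
  have ha : (x.1 : ℝ) ≤ m := by exact_mod_cast hx.1
  have hb : (x.2 : ℝ) ≤ m' := by exact_mod_cast hx.2
  exact ⟨div_nonneg (by linarith) (by linarith),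
    div_le_one_of_le₀ (by linarith) (by linarith)⟩

theorem remainingFraction_draw_le (hx : x ∈ antidiagonal k) (hsupp : x.1 ≤ m ∧ x.2 ≤ m')
    (hk : k + 1 < m + m') (c l : ℝ) :
    remainingFraction m m' x * exp (l * (remainingFraction m m' (x.1 + 1, x.2) - c)) +
        (1 - remainingFraction m m' x) * exp (l * (remainingFraction m m' (x.1, x.2 + 1) - c)) ≤
      exp (l ^ 2 * (((m + m' : ℕ) : ℝ) - k - 1)⁻¹ ^ 2 / 8) *
        exp (l * (remainingFraction m m' x - c)) := by
  obtain ⟨h0, h1⟩ := remainingFraction_mem_Icc hsupp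
  refine (hoeffding_lemma_two_point h0 h1 _ _).trans_eq ?_
  rw [← exp_add]
  congr 1
  -- The two possible next values average to `remainingFraction m m' x` and lie
  -- `1 / (m + m' - k - 1)` apart.
  obtain rfl := HasAntidiagonal.mem_antidiagonal.1 hx
  have hN : (1 : ℝ) < ((m : ℝ) - x.1) + ((m' : ℝ) - x.2) := by
    have : ((x.1 + x.2 + 1 : ℕ) : ℝ) < ((m + m' : ℕ) : ℝ) := by exact_mod_cast hk
    push_cast at this
    linarith
  have h2 : ((m : ℝ) - x.1) + ((m' : ℝ) - x.2) ≠ 0 := by linarith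
  have h3 : ((m : ℝ) - (x.1 + 1)) + ((m' : ℝ) - x.2) ≠ 0 := by linarith
  have h4 : ((m : ℝ) - x.1) + ((m' : ℝ) - (x.2 + 1)) ≠ 0 := by linarith
  have h5 : (m : ℝ) + m' - (x.1 + x.2) - 1 ≠ 0 := by linarith
  unfold remainingFraction
  push_cast
  field_simp
  ring

end remainingFraction

namespace hypergeomExpectation

variable {m m' k : ℕ}

theorem mono {f g : ℕ × ℕ → ℝ}
    (h : ∀ x ∈ antidiagonal k, x.1 ≤ m → x.2 ≤ m' → f x ≤ g x) :
    hypergeomExpectation m m' k f ≤ hypergeomExpectation m m' k g := by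
  refine div_le_div_of_nonneg_right (sum_le_sum fun x hx => ?_) (Nat.cast_nonneg _)
  by_cases hx' : x.1 ≤ m ∧ x.2 ≤ m'
  · exact mul_le_mul_of_nonneg_left (h x hx hx'.1 hx'.2) (by positivity)
  · rcases not_and_or.1 hx' with h1 | h2
    · simp [Nat.choose_eq_zero_of_lt (not_le.1 h1)]
    · simp [Nat.choose_eq_zero_of_lt (not_le.1 h2)]

theorem const_mul (c : ℝ) (g : ℕ × ℕ → ℝ) :
    hypergeomExpectation m m' k (fun x => c * g x) = c * hypergeomExpectation m m' k g := by
  simp only [hypergeomExpectation, mul_left_comm _ c, ← mul_sum, mul_div_assoc]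

theorem zero (g : ℕ × ℕ → ℝ) : hypergeomExpectation m m' 0 g = g (0, 0) := by
  simp [hypergeomExpectation]

theorem succ (hk : k < m + m') (g : ℕ × ℕ → ℝ) :
    hypergeomExpectation m m' (k + 1) g = hypergeomExpectation m m' k fun x =>
      remainingFraction m m' x * g (x.1 + 1, x.2) +
        (1 - remainingFraction m m' x) * g (x.1, x.2 + 1) := by
  have hN : (m : ℝ) + m' - k ≠ 0 := by
    rw [sub_ne_zero]; exact_mod_cast hk.ne'
  have hchoose : ((m + m').choose k : ℝ) ≠ 0 := by
    exact_mod_cast (Nat.choose_pos (by omega)).ne'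
  have hchoose' : ((m + m').choose (k + 1) : ℝ) ≠ 0 := by
    exact_mod_cast (Nat.choose_pos (by omega)).ne'
  set S := ∑ x ∈ antidiagonal (k + 1), (m.choose x.1 * m'.choose x.2 : ℝ) * g x
  have hsum : ∑ x ∈ antidiagonal k, (m.choose x.1 * m'.choose x.2 : ℝ) *
      (remainingFraction m m' x * g (x.1 + 1, x.2) +
        (1 - remainingFraction m m' x) * g (x.1, x.2 + 1)) =
      (k + 1) * S / ((m : ℝ) + m' - k) := by
    rw [succ_mul_sum_antidiagonal_choose_mul_choose, sum_div]
    refine sum_congr rfl fun x hx => ?_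
    have hx' : ((m : ℝ) + m' - k) = ((m : ℝ) - x.1) + ((m' : ℝ) - x.2) := by
      rw [← HasAntidiagonal.mem_antidiagonal.1 hx]; push_cast; ring
    rw [remainingFraction_of_mem_antidiagonal hx]
    field_simp
    linear_combination (m.choose x.1 * m'.choose x.2 : ℝ) * g (x.1, x.2 + 1) * hx'
  have hnorm := Nat.cast_choose_succ_mul (m + m') k
  push_cast at hnorm
  unfold hypergeomExpectation
  rw [hsum, div_div, div_eq_div_iff hchoose' (mul_ne_zero hN hchoose)]
  linear_combination (-S) * hnorm

theorem compl (hk : k ≤ m + m') (g : ℕ × ℕ → ℝ) :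
    hypergeomExpectation m m' k g =
      hypergeomExpectation m m' (m + m' - k) fun x => g (m - x.1, m' - x.2) := by
  unfold hypergeomExpectation
  rw [Nat.choose_symm hk]
  congr 1
  refine sum_bij_ne_zero (fun x _ _ => (m - x.1, m' - x.2)) ?_ ?_ ?_ ?_
  · intro x hx hne
    have := le_of_choose_mul_choose_mul_ne_zero hne
    simp only [HasAntidiagonal.mem_antidiagonal] at hx ⊢
    omega
  · intro x _ hx y _ hy hxy
    have := le_of_choose_mul_choose_mul_ne_zero hx
    have := le_of_choose_mul_choose_mul_ne_zero hy
    simp only [Prod.mk.injEq] at hxy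
    ext <;> omega
  · intro y hy hne
    have hy' := le_of_choose_mul_choose_mul_ne_zero hne
    refine ⟨(m - y.1, m' - y.2), ?_, ?_, ?_⟩
    · simp only [HasAntidiagonal.mem_antidiagonal] at hy ⊢
      omega
    · rwa [Nat.choose_symm hy'.1, Nat.choose_symm hy'.2]
    · ext <;> simp only <;> omega
  · intro x _ hx
    exact choose_mul_choose_compl (le_of_choose_mul_choose_mul_ne_zero hx) g

theorem ite_le_exp_of_mgf_le {f : ℕ × ℕ → ℝ} {P : ℕ × ℕ → Prop} [DecidablePred P]
    {s V : ℝ} (hs : 0 ≤ s) (hV : 0 < V)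
    (hP : ∀ x ∈ antidiagonal k, x.1 ≤ m → x.2 ≤ m' → P x → s ≤ f x)
    (hf : ∀ l, 0 ≤ l →
      hypergeomExpectation m m' k (fun x => exp (l * f x)) ≤ exp (l ^ 2 * V / 8)) :
    hypergeomExpectation m m' k (fun x => if P x then 1 else 0) ≤ exp (-(2 * s ^ 2 / V)) := by
  set l := 4 * s / V
  have hl : 0 ≤ l := by positivity
  calc hypergeomExpectation m m' k (fun x => if P x then 1 else 0)
      ≤ hypergeomExpectation m m' k (fun x => exp (-(l * s)) * exp (l * f x)) := by
        refine mono fun x hx h1 h2 => ?_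
        rw [← exp_add]
        split_ifs with hPx
        · exact one_le_exp (by nlinarith [hP x hx h1 h2 hPx])
        · positivity
    _ = exp (-(l * s)) * hypergeomExpectation m m' k (fun x => exp (l * f x)) := const_mul _ _
    _ ≤ exp (-(l * s)) * exp (l ^ 2 * V / 8) := by gcongr; exact hf l hl
    _ = exp (-(2 * s ^ 2 / V)) := by
        rw [← exp_add]
        congr 1
        simp only [l]
        field_simp
        ring

theorem exp_remainingFraction_le (hk : k < m + m') (l : ℝ) :
    hypergeomExpectation m m' k
        (fun x => exp (l * (remainingFraction m m' x - m / ((m : ℝ) + m')))) ≤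
      exp (l ^ 2 * serflingBound (m + m') k / 8) := by
  induction k with
  | zero => simp [zero, remainingFraction, serflingBound]
  | succ k ih =>
    set c := (m : ℝ) / ((m : ℝ) + m')
    set σ := (((m + m' : ℕ) : ℝ) - k - 1)⁻¹ ^ 2
    calc hypergeomExpectation m m' (k + 1) (fun x => exp (l * (remainingFraction m m' x - c)))
        ≤ hypergeomExpectation m m' k
            (fun x => exp (l ^ 2 * σ / 8) * exp (l * (remainingFraction m m' x - c))) := by
          rw [succ (by omega)]
          exact mono fun x hx h1 h2 => remainingFraction_draw_le hx ⟨h1, h2⟩ hk c l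
      _ ≤ exp (l ^ 2 * σ / 8) * exp (l ^ 2 * serflingBound (m + m') k / 8) := by
          rw [const_mul]
          gcongr
          exact ih (by omega)
      _ ≤ exp (l ^ 2 * serflingBound (m + m') (k + 1) / 8) := by
          rw [← exp_add]
          gcongr
          nlinarith [sq_nonneg l, serflingBound_add_inv_sq_le hk]

theorem upper_tail_le (hk0 : 0 < k) (hk : k < m + m') {t : ℝ} (ht : 0 ≤ t) :
    hypergeomExpectation m m' k
        (fun x => if (k : ℝ) * (m / ((m : ℝ) + m') + t) < x.1 then 1 else 0) ≤
      exp (-(2 * k * t ^ 2) / (((m : ℝ) + m' - k + 1) / ((m : ℝ) + m'))) := by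
  have hk0' : (0 : ℝ) < k := by exact_mod_cast hk0
  have hkn : (0 : ℝ) < m + m' - k := sub_pos.2 (by exact_mod_cast hk)
  have hV : serflingBound (m + m') k =
      k * (m + m' - k + 1) / ((m + m') * (m + m' - k) ^ 2) := by
    simp [serflingBound]
  refine (ite_le_exp_of_mgf_le (f := fun x => m / ((m : ℝ) + m') - remainingFraction m m' x)
    (s := k * t / (m + m' - k)) (V := serflingBound (m + m') k) (by positivity)
    (by rw [hV]; exact div_pos (by nlinarith) (mul_pos (by linarith) (pow_pos hkn 2)))
    ?_ ?_).trans_eq ?_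
  · intro x hx _ _ hP
    have hpn : (m : ℝ) / (m + m') * (m + m') = m := div_mul_cancel₀ _ (by linarith)
    rw [remainingFraction_of_mem_antidiagonal hx, div_le_iff₀ hkn, sub_mul,
      div_mul_cancel₀ _ hkn.ne']
    linarith
  · intro l _
    refine le_of_eq_of_le ?_ ((exp_remainingFraction_le hk (-l)).trans_eq (by rw [neg_sq]))
    congr with x
    ring_nf
  · rw [hV]
    congr 1
    field_simp

theorem upper_tail_le_of_compl (hk0 : 0 < k) (hk : k < m + m') {t : ℝ} (ht : 0 ≤ t) :
    hypergeomExpectation m m' k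
        (fun x => if (k : ℝ) * (m / ((m : ℝ) + m') + t) < x.1 then 1 else 0) ≤
      exp (-(2 * k * t ^ 2) / (((m : ℝ) + m' - k) * (k + 1) / (((m : ℝ) + m') * k))) := by
  have hk0' : (0 : ℝ) < k := by exact_mod_cast hk0
  have hkn : (0 : ℝ) < m + m' - k := sub_pos.2 (by exact_mod_cast hk)
  have hV : serflingBound (m + m') (m + m' - k) =
      (m + m' - k) * (k + 1) / ((m + m') * k ^ 2) := by
    simp only [serflingBound, Nat.cast_sub hk.le]
    push_cast
    ring
  rw [compl hk.le]
  refine (ite_le_exp_of_mgf_le (f := fun x => remainingFraction m m' x - m / ((m : ℝ) + m')) ht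
    (by rw [hV]; exact div_pos (by nlinarith) (mul_pos (by linarith) (pow_pos hk0' 2))) ?_
    fun l _ => exp_remainingFraction_le (by omega) l).trans_eq ?_
  · intro x hx h1 _ hP
    rw [Nat.cast_sub h1] at hP
    rw [remainingFraction_of_mem_antidiagonal hx, Nat.cast_sub hk.le, le_sub_iff_add_le]
    push_cast
    rw [sub_sub_cancel, le_div_iff₀ hk0']
    linarith
  · rw [hV]
    congr 1
    field_simp

end hypergeomExpectation

open Classical in
theorem hyperProb_eq_hypergeomExpectation (m m' k : ℕ) (P : ℕ → Prop) :
    hyperProb (m + m') m k P = hypergeomExpectation m m' k fun x => if P x.1 then 1 else 0 := by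
  rw [hyperProb, hypergeomExpectation, Nat.add_sub_cancel_left,
    Nat.sum_antidiagonal_eq_sum_range_succ_mk, sum_div]
  refine sum_congr rfl fun i _ => ?_
  split_ifs <;> simp

theorem rho_of_le {n k : ℕ} (hn : n ≠ 0) (h : (k : ℝ) ≤ n / 2) :
    rho n k = (n - k + 1) / n := by
  rw [rho, if_pos h]
  field_simp
  ring

theorem rho_of_lt {n k : ℕ} (hn : n ≠ 0) (hk : k ≠ 0) (h : (n : ℝ) / 2 < k) :
    rho n k = (n - k) * (k + 1) / (n * k) := by
  rw [rho, if_neg h.not_ge]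
  field_simp

theorem hoeffding_serfling_overestimation_general (n m k : ℕ) (hmn : m ≤ n)
    (hk1 : 1 ≤ k) (hkn : k < n) (p : ℝ) (hp : p = (m : ℝ) / n) (q : ℝ) (hq : 1 ≤ q) :
    hyperProb n m k (fun i => (k : ℝ) * p * q < (i : ℝ)) ≤
      Real.exp (-(2 * k * (p * q - p) ^ 2) / rho n k) := by
  obtain ⟨m', rfl⟩ := Nat.exists_eq_add_of_le hmn
  have ht : 0 ≤ p * q - p := by
    rw [show p * q - p = p * (q - 1) by ring, hp]
    exact mul_nonneg (by positivity) (by linarith)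
  have hthreshold : (k : ℝ) * p * q = k * (m / ((m : ℝ) + m') + (p * q - p)) := by
    rw [hp]; push_cast; ring
  rw [hyperProb_eq_hypergeomExpectation]
  simp only [hthreshold]
  rcases le_or_gt (k : ℝ) ((m + m' : ℕ) / 2) with h | h
  · rw [rho_of_le (by omega) h]
    push_cast
    exact hypergeomExpectation.upper_tail_le hk1 hkn ht
  · rw [rho_of_lt (by omega) (by omega) h]
    push_cast
    exact hypergeomExpectation.upper_tail_le_of_compl hk1 hkn ht

theorem hoeffding_serfling_overestimation (n m k : ℕ) (hn : 2 ≤ n) (hm0 : 0 < m) (hmn : m ≤ n)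
    (hk1 : 1 ≤ k) (hkn : k < n) (p : ℝ) (hp : p = (m : ℝ) / n) (q : ℝ) (hq : 1 ≤ q) :
    hyperProb n m k (fun i => (k : ℝ) * p * q < (i : ℝ)) ≤
      Real.exp (-(2 * k * (p * q - p) ^ 2) / rho n k) :=
  hoeffding_serfling_overestimation_general n m k hmn hk1 hkn p hp q hq
end

section
/- For every population of n ≥ 2 rows of which m satisfy a predicate (0 < m ≤ n, p = m/n), every sample size 1 ≤ k < n, and every real q ≥ 1, the hypergeometric random variable X̂ counting satisfying rows among k rows drawn uniformly without replacement satisfies P(X̂ < k·p/q) ≤ exp(−2k·(p−p/q)²/ρ). (Hoeffding–Serfling bound for the under-estimation probability of sampling without replacement.) -/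
open Real ProbabilityTheory MeasureTheory Finset

lemma one_sub_add_mul_exp_neg_le {θ : ℝ} (h0 : 0 ≤ θ) (h1 : θ ≤ 1) (u : ℝ) :
    1 - θ + θ * exp (-u) ≤ exp (-(θ * u) + u ^ 2 / 8) := by
  have hmgf := (hasSubgaussianMGF_of_mem_Icc (μ := Ber(true, false, ⟨θ, h0, h1⟩))
    (X := fun b => if b then (1 : ℝ) else 0) (a := 0) (b := 1)
    Measurable.of_discrete.aemeasurable (ae_of_all _ fun b => by cases b <;> simp)).mgf_le (-u)
  simp only [mgf, integral_bernoulliMeasure] at hmgf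
  norm_num at hmgf
  calc 1 - θ + θ * exp (-u)
      = exp (-(θ * u)) * (θ * exp (-(u * (1 - θ))) + (1 - θ) * exp (u * θ)) := by
        rw [mul_add, mul_left_comm, ← exp_add, mul_left_comm, ← exp_add,
          show -(θ * u) + -(u * (1 - θ)) = -u by ring, show -(θ * u) + u * θ = 0 by ring,
          exp_zero]
        ring
    _ ≤ exp (-(θ * u)) * exp (u ^ 2 / 8) := by
        gcongr; exact hmgf.trans_eq (by ring_nf)
    _ = exp (-(θ * u) + u ^ 2 / 8) := (exp_add _ _).symm

open Classical in
lemma sum_ite_le_exp_of_mgf_le {ι : Type*} {s : Finset ι} {w D : ι → ℝ} {P : ι → Prop}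
    {B x : ℝ} (hw : ∀ i ∈ s, 0 ≤ w i) (hB : 0 < B) (hx : 0 ≤ x)
    (hP : ∀ i ∈ s, P i → x ≤ D i)
    (hmgf : ∀ t, 0 ≤ t → ∑ i ∈ s, w i * exp (t * D i) ≤ exp (t ^ 2 / 8 * B)) :
    ∑ i ∈ s, (if P i then w i else 0) ≤ exp (-(2 * x ^ 2 / B)) := by
  set t := 4 * x / B
  have ht : 0 ≤ t := by positivity
  calc ∑ i ∈ s, (if P i then w i else 0)
      ≤ ∑ i ∈ s, w i * exp (t * D i) * exp (-(t * x)) := by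
        refine sum_le_sum fun i hi => ?_
        rw [mul_assoc, ← exp_add]
        split_ifs with h
        · exact le_mul_of_one_le_right (hw i hi) (one_le_exp (by nlinarith [hP i hi h]))
        · exact mul_nonneg (hw i hi) (exp_pos _).le
    _ ≤ exp (t ^ 2 / 8 * B) * exp (-(t * x)) := by
        rw [← sum_mul]; gcongr; exact hmgf t ht
    _ = exp (-(2 * x ^ 2 / B)) := by
        rw [← exp_add]; congr 1; simp only [t]; field_simp; ring

lemma cast_choose_succ_right_eq (a k : ℕ) :
    (a.choose (k + 1) : ℝ) * (k + 1) = a.choose k * (a - k) := by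
  rcases le_or_gt k a with h | h
  · rw [← Nat.cast_sub h]; exact_mod_cast Nat.choose_succ_right_eq a k
  · simp [Nat.choose_eq_zero_of_lt h, Nat.choose_eq_zero_of_lt (Nat.lt_succ_of_lt h)]

/-- Split `k + 1 = i + (k + 1 - i)` and absorb each factor into one binomial coefficient by
`cast_choose_succ_right_eq`. -/
lemma sum_choose_mul_choose_succ (a b k : ℕ) (g : ℕ → ℝ) :
    (k + 1) * ∑ i ∈ range (k + 2), (a.choose i : ℝ) * b.choose (k + 1 - i) * g i =
      ∑ i ∈ range (k + 1), (a.choose i : ℝ) * b.choose (k - i) *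
        (((b : ℝ) - k + i) * g i + ((a : ℝ) - i) * g (i + 1)) := by
  have hsplit : ∀ i ∈ range (k + 2),
      ((k : ℝ) + 1) * ((a.choose i : ℝ) * b.choose (k + 1 - i) * g i) =
        i * ((a.choose i : ℝ) * b.choose (k + 1 - i) * g i) +
          ((k + 1 - i : ℕ) : ℝ) * ((a.choose i : ℝ) * b.choose (k + 1 - i) * g i) := by
    intro i hi
    rw [Nat.cast_sub (mem_range_succ_iff.mp hi)]; push_cast; ring
  rw [mul_sum, sum_congr rfl hsplit, sum_add_distrib,
    sum_range_succ' (fun i : ℕ => (i : ℝ) * _),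
    sum_range_succ (fun i : ℕ => ((k + 1 - i : ℕ) : ℝ) * _)]
  simp only [Nat.cast_zero, zero_mul, add_zero, Nat.sub_self, ← sum_add_distrib]
  refine sum_congr rfl fun i hi => ?_
  have hik := mem_range_succ_iff.mp hi
  rw [show k + 1 - (i + 1) = k - i by omega, show k + 1 - i = k - i + 1 by omega]
  have ha := cast_choose_succ_right_eq a i
  have hb := cast_choose_succ_right_eq b (k - i)
  rw [Nat.cast_sub hik] at hb
  push_cast [Nat.cast_sub hik]
  linear_combination (b.choose (k - i) * g (i + 1) : ℝ) * ha + (a.choose i * g i : ℝ) * hb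

noncomputable def hyperPmf (n m k i : ℕ) : ℝ :=
  ((m.choose i : ℝ) * ((n - m).choose (k - i) : ℝ)) / (n.choose k : ℝ)

lemma hyperPmf_nonneg (n m k i : ℕ) : 0 ≤ hyperPmf n m k i := by
  unfold hyperPmf; positivity

section Hypergeometric

variable {n m k : ℕ}

lemma le_and_sub_le_of_hyperPmf_ne_zero {i : ℕ} (h : hyperPmf n m k i ≠ 0) :
    i ≤ m ∧ k - i ≤ n - m := by
  by_contra! hlt
  refine h ?_
  by_cases him : i ≤ m
  · simp [hyperPmf, Nat.choose_eq_zero_of_lt (hlt him)]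
  · simp [hyperPmf, Nat.choose_eq_zero_of_lt (not_le.mp him)]

/-- Given `i` satisfying rows among the first `k` draws, the next draw satisfies the predicate
with probability `(m - i) / (n - k)`. -/
lemma sum_hyperPmf_succ_mul (hmn : m ≤ n) (hkn : k < n) (g : ℕ → ℝ) :
    ∑ i ∈ range (k + 2), hyperPmf n m (k + 1) i * g i =
      ∑ i ∈ range (k + 1), hyperPmf n m k i *
        ((((n : ℝ) - k - m + i) * g i + ((m : ℝ) - i) * g (i + 1)) / (n - k)) := by
  have hC := cast_choose_succ_right_eq n k
  have hCk : (n.choose k : ℝ) ≠ 0 := by exact_mod_cast (Nat.choose_pos hkn.le).ne'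
  have hnk : (n : ℝ) - k ≠ 0 := sub_ne_zero.mpr (by exact_mod_cast hkn.ne')
  have hW := sum_choose_mul_choose_succ m (n - m) k g
  rw [Nat.cast_sub hmn] at hW
  calc ∑ i ∈ range (k + 2), hyperPmf n m (k + 1) i * g i
      = ((k + 1) * ∑ i ∈ range (k + 2), (m.choose i : ℝ) * (n - m).choose (k + 1 - i) * g i) /
          (n.choose k * (n - k)) := by
        rw [← hC, mul_sum, sum_div]
        refine sum_congr rfl fun i _ => ?_
        unfold hyperPmf
        field_simp
    _ = _ := by
        rw [hW, sum_div]
        refine sum_congr rfl fun i _ => ?_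
        unfold hyperPmf
        field_simp
        ring

lemma hyperPmf_compl {i : ℕ} (hkn : k ≤ n) (him : i ≤ m) (hki : k - i ≤ n - m)
    (hik : i ≤ k) : hyperPmf n m (n - k) (m - i) = hyperPmf n m k i := by
  unfold hyperPmf
  rw [Nat.choose_symm hkn, Nat.choose_symm him, show n - k - (m - i) = n - m - (k - i) by omega,
    Nat.choose_symm hki]

/-- The `n - k` rows left out of the sample form a sample containing `m - X` satisfying rows. -/
lemma sum_hyperPmf_mul_compl (hmn : m ≤ n) (hkn : k ≤ n) (f : ℝ → ℝ) :
    ∑ i ∈ range (k + 1), hyperPmf n m k i * f i =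
      ∑ j ∈ range (n - k + 1), hyperPmf n m (n - k) j * f (m - j) := by
  refine sum_bij_ne_zero (fun i _ _ => m - i) ?_ ?_ ?_ ?_
  · intro i hi h
    obtain ⟨him, hki⟩ := le_and_sub_le_of_hyperPmf_ne_zero (left_ne_zero_of_mul h)
    have := mem_range_succ_iff.mp hi
    exact mem_range_succ_iff.mpr (by omega)
  · intro i₁ _ h₁ i₂ _ h₂ heq
    have := (le_and_sub_le_of_hyperPmf_ne_zero (left_ne_zero_of_mul h₁)).1
    have := (le_and_sub_le_of_hyperPmf_ne_zero (left_ne_zero_of_mul h₂)).1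
    omega
  · intro j hj h
    obtain ⟨hjm, hkj⟩ := le_and_sub_le_of_hyperPmf_ne_zero (left_ne_zero_of_mul h)
    have := mem_range_succ_iff.mp hj
    have hsym := hyperPmf_compl (n := n) (m := m) (k := k) (i := m - j) hkn (by omega)
      (by omega) (by omega)
    rw [Nat.sub_sub_self hjm] at hsym
    refine ⟨m - j, mem_range_succ_iff.mpr (by omega), ?_, Nat.sub_sub_self hjm⟩
    rwa [← hsym, Nat.cast_sub hjm]
  · intro i hi h
    obtain ⟨him, hki⟩ := le_and_sub_le_of_hyperPmf_ne_zero (left_ne_zero_of_mul h)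
    rw [hyperPmf_compl hkn him hki (mem_range_succ_iff.mp hi), Nat.cast_sub him, sub_sub_cancel]

end Hypergeometric

/-- Serfling's martingale `(k p - X) / (n - k)`, as a function of the number `X = x` of
satisfying rows among the first `k` draws. -/
noncomputable def serflingDev (n m k : ℕ) (x : ℝ) : ℝ := (k * m / n - x) / (n - k)

noncomputable def serflingSum (n k : ℕ) : ℝ := ∑ j ∈ range k, 1 / ((n : ℝ) - (j + 1)) ^ 2

section SerflingMartingale

variable {n m k : ℕ}

/-- Given `X = i` after `k` draws, the next increment of `serflingDev` is `(θ - B) / d` with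
`B ~ Bernoulli θ`, `θ = (m - i) / (n - k)` and `d = n - k - 1`: Hoeffding's lemma applies. -/
lemma cond_mgf_serflingDev_succ_le {i : ℕ} (hkn : k + 1 < n) (him : i ≤ m)
    (hθ : m + k ≤ n + i) (t : ℝ) :
    (((n : ℝ) - k - m + i) * exp (t * serflingDev n m (k + 1) i) +
        ((m : ℝ) - i) * exp (t * serflingDev n m (k + 1) (i + 1 : ℕ))) / (n - k) ≤
      exp (t * serflingDev n m k i + t ^ 2 / 8 * (1 / ((n : ℝ) - (k + 1)) ^ 2)) := by
  have hkn' : (k : ℝ) + 1 < n := by exact_mod_cast hkn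
  have hn : (n : ℝ) ≠ 0 := by exact_mod_cast (by omega : n ≠ 0)
  have hc : (n : ℝ) - k ≠ 0 := by linarith
  have hd : (n : ℝ) - (k + 1) ≠ 0 := by linarith
  set θ := ((m : ℝ) - i) / (n - k) with hθdef
  set u := t / ((n : ℝ) - (k + 1)) with hu
  have hθ0 : 0 ≤ θ := div_nonneg (sub_nonneg.mpr (by exact_mod_cast him)) (by linarith)
  have hθ1 : θ ≤ 1 := by
    have : (m : ℝ) + k ≤ n + i := by exact_mod_cast hθ
    exact (div_le_one (by linarith)).mpr (by linarith)
  have hshift : t * serflingDev n m (k + 1) (i + 1 : ℕ) = t * serflingDev n m (k + 1) i + -u := by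
    simp only [serflingDev, hu]; push_cast; field_simp; ring
  have hmart : t * serflingDev n m k i = t * serflingDev n m (k + 1) i - θ * u := by
    simp only [serflingDev, hu, hθdef]; push_cast; field_simp; ring
  calc (((n : ℝ) - k - m + i) * exp (t * serflingDev n m (k + 1) i) +
        ((m : ℝ) - i) * exp (t * serflingDev n m (k + 1) (i + 1 : ℕ))) / (n - k)
      = exp (t * serflingDev n m (k + 1) i) * (1 - θ + θ * exp (-u)) := by
        rw [hshift, exp_add, hθdef]; field_simp; ring
    _ ≤ exp (t * serflingDev n m (k + 1) i) * exp (-(θ * u) + u ^ 2 / 8) := by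
        gcongr; exact one_sub_add_mul_exp_neg_le hθ0 hθ1 u
    _ = _ := by rw [← exp_add, hmart, hu]; congr 1; field_simp; ring

lemma sum_hyperPmf_mul_exp_serflingDev_le (hmn : m ≤ n) (hkn : k < n) (t : ℝ) :
    ∑ i ∈ range (k + 1), hyperPmf n m k i * exp (t * serflingDev n m k i) ≤
      exp (t ^ 2 / 8 * serflingSum n k) := by
  induction k with
  | zero => simp [hyperPmf, serflingDev, serflingSum]
  | succ k ih =>
    set E := exp (t ^ 2 / 8 * (1 / ((n : ℝ) - (k + 1)) ^ 2))
    have hterm : ∀ i ∈ range (k + 1),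
        hyperPmf n m k i * ((((n : ℝ) - k - m + i) * exp (t * serflingDev n m (k + 1) i) +
          ((m : ℝ) - i) * exp (t * serflingDev n m (k + 1) (i + 1 : ℕ))) / (n - k)) ≤
        hyperPmf n m k i * exp (t * serflingDev n m k i) * E := by
      intro i hi
      by_cases h0 : hyperPmf n m k i = 0
      · simp [h0]
      obtain ⟨him, hki⟩ := le_and_sub_le_of_hyperPmf_ne_zero h0
      have hik := mem_range_succ_iff.mp hi
      rw [mul_assoc, ← exp_add]
      exact mul_le_mul_of_nonneg_left (cond_mgf_serflingDev_succ_le hkn him (by omega) t)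
        (hyperPmf_nonneg n m k i)
    calc ∑ i ∈ range (k + 1 + 1), hyperPmf n m (k + 1) i * exp (t * serflingDev n m (k + 1) i)
        ≤ ∑ i ∈ range (k + 1), hyperPmf n m k i * exp (t * serflingDev n m k i) * E := by
          rw [sum_hyperPmf_succ_mul hmn (by omega) fun j => exp (t * serflingDev n m (k + 1) j)]
          exact sum_le_sum hterm
      _ ≤ exp (t ^ 2 / 8 * serflingSum n k) * E := by
          rw [← sum_mul]; gcongr; exact ih (by omega)
      _ = exp (t ^ 2 / 8 * serflingSum n (k + 1)) := by
          rw [← exp_add, ← mul_add, serflingSum, serflingSum, sum_range_succ]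

lemma sq_mul_serflingSum_le (hkn : k < n) :
    ((n : ℝ) - k) ^ 2 * serflingSum n k ≤ k * (n - k + 1) / n := by
  induction k with
  | zero => simp [serflingSum]
  | succ k ih =>
    have hkn' : (k : ℝ) + 1 < n := by exact_mod_cast hkn
    have hn : (0 : ℝ) < n := by linarith [k.cast_nonneg (α := ℝ)]
    have ih := ih (by omega)
    set a := (n : ℝ) - k with ha
    have ha1 : 0 < a - 1 := by linarith
    have ha0 : 0 < a := by linarith
    have hV : serflingSum n (k + 1) = serflingSum n k + 1 / (a - 1) ^ 2 := by
      rw [serflingSum, sum_range_succ, ha, sub_sub]; rfl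
    have hVk : serflingSum n k ≤ k * (a + 1) / n / a ^ 2 := by
      rw [le_div_iff₀ (by positivity)]; linarith
    have hnum : 0 ≤ ((k : ℝ) + 1) * a ^ 3 - (k * (a + 1) * (a - 1) ^ 2 + n * a ^ 2) := by
      rw [show (n : ℝ) = k + a by ring]; nlinarith [k.cast_nonneg (α := ℝ)]
    have hdiff : (k + 1) * (a - 1 + 1) / n - ((a - 1) ^ 2 * (k * (a + 1) / n / a ^ 2) + 1) =
        (((k : ℝ) + 1) * a ^ 3 - (k * (a + 1) * (a - 1) ^ 2 + n * a ^ 2)) / (n * a ^ 2) := by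
      field_simp; ring
    rw [hV]
    push_cast
    rw [show (n : ℝ) - (k + 1) = a - 1 by ring]
    calc (a - 1) ^ 2 * (serflingSum n k + 1 / (a - 1) ^ 2)
        = (a - 1) ^ 2 * serflingSum n k + 1 := by field_simp
      _ ≤ (a - 1) ^ 2 * (k * (a + 1) / n / a ^ 2) + 1 := by gcongr
      _ ≤ (k + 1) * (a - 1 + 1) / n := sub_nonneg.mp (hdiff ▸ div_nonneg hnum (by positivity))

lemma sum_hyperPmf_mul_exp_dev_le (hmn : m ≤ n) (hkn : k < n) (s : ℝ) :
    ∑ i ∈ range (k + 1), hyperPmf n m k i * exp (s * (k * m / n - i)) ≤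
      exp (s ^ 2 / 8 * (k * (n - k + 1) / n)) := by
  have hnk : (n : ℝ) - k ≠ 0 := sub_ne_zero.mpr (by exact_mod_cast hkn.ne')
  calc ∑ i ∈ range (k + 1), hyperPmf n m k i * exp (s * (k * m / n - i))
      = ∑ i ∈ range (k + 1), hyperPmf n m k i * exp (s * (n - k) * serflingDev n m k i) := by
        refine sum_congr rfl fun i _ => ?_
        rw [serflingDev]; field_simp
    _ ≤ exp ((s * (n - k)) ^ 2 / 8 * serflingSum n k) :=
        sum_hyperPmf_mul_exp_serflingDev_le hmn hkn _
    _ ≤ exp (s ^ 2 / 8 * (k * (n - k + 1) / n)) := by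
        rw [exp_le_exp, mul_pow, mul_div_right_comm, mul_assoc]
        gcongr
        exact sq_mul_serflingSum_le hkn

lemma sum_hyperPmf_mul_exp_dev_le_compl (hmn : m ≤ n) (hk : 0 < k) (hkn : k ≤ n) (s : ℝ) :
    ∑ i ∈ range (k + 1), hyperPmf n m k i * exp (s * (k * m / n - i)) ≤
      exp (s ^ 2 / 8 * ((n - k) * (k + 1) / n)) := by
  have hk' : (k : ℝ) ≠ 0 := by exact_mod_cast hk.ne'
  have hn : (n : ℝ) ≠ 0 := by exact_mod_cast (hk.trans_le hkn).ne'
  have hbound := sq_mul_serflingSum_le (n := n) (k := n - k) (by omega)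
  rw [Nat.cast_sub hkn, sub_sub_cancel] at hbound
  calc ∑ i ∈ range (k + 1), hyperPmf n m k i * exp (s * (k * m / n - i))
      = ∑ j ∈ range (n - k + 1),
          hyperPmf n m (n - k) j * exp (-(s * k) * serflingDev n m (n - k) j) := by
        rw [sum_hyperPmf_mul_compl hmn hkn fun x => exp (s * (k * m / n - x))]
        refine sum_congr rfl fun j _ => ?_
        rw [serflingDev, Nat.cast_sub hkn, sub_sub_cancel]; congr 2; field_simp; ring
    _ ≤ exp ((-(s * k)) ^ 2 / 8 * serflingSum n (n - k)) :=
        sum_hyperPmf_mul_exp_serflingDev_le hmn (by omega) _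
    _ ≤ exp (s ^ 2 / 8 * ((n - k) * (k + 1) / n)) := by
        rw [exp_le_exp, neg_sq, mul_pow, mul_div_right_comm, mul_assoc]
        gcongr

lemma rho_pos (hkn : k < n) : 0 < rho n k := by
  have hkn' : (k : ℝ) < n := by exact_mod_cast hkn
  have hn : (0 : ℝ) < n := by linarith [k.cast_nonneg (α := ℝ)]
  unfold rho
  split_ifs
  · rw [sub_pos, div_lt_one hn]; linarith
  · have : (k : ℝ) / n < 1 := (div_lt_one hn).mpr hkn'
    have : (0 : ℝ) ≤ 1 / k := by positivity
    nlinarith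

lemma sum_hyperPmf_mul_exp_dev_le_rho (hmn : m ≤ n) (hk : 0 < k) (hkn : k < n) (s : ℝ) :
    ∑ i ∈ range (k + 1), hyperPmf n m k i * exp (s * (k * m / n - i)) ≤
      exp (s ^ 2 / 8 * (k * rho n k)) := by
  have hn : (n : ℝ) ≠ 0 := by exact_mod_cast (by omega : n ≠ 0)
  have hk' : (k : ℝ) ≠ 0 := by exact_mod_cast hk.ne'
  unfold rho
  split_ifs
  · convert sum_hyperPmf_mul_exp_dev_le hmn hkn s using 4
    field_simp; ring
  · convert sum_hyperPmf_mul_exp_dev_le_compl hmn hk hkn.le s using 4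
    field_simp

end SerflingMartingale

theorem hoeffding_serfling_underestimation_general (n m k : ℕ) (hmn : m ≤ n)
    (hk1 : 1 ≤ k) (hkn : k < n) (p : ℝ) (hp : p = (m : ℝ) / n) (q : ℝ) (hq : 1 ≤ q) :
    hyperProb n m k (fun i => (i : ℝ) < k * p / q) ≤
      Real.exp (-(2 * k * (p - p / q) ^ 2) / rho n k) := by
  have hp0 : 0 ≤ p := hp ▸ by positivity
  have hdev : 0 ≤ k * (p - p / q) :=
    mul_nonneg k.cast_nonneg (sub_nonneg.mpr (div_le_self hp0 hq))
  have hk : (k : ℝ) ≠ 0 := by exact_mod_cast (by omega : k ≠ 0)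
  -- `hyperProb n m k P` unfolds to `∑ i ∈ range (k + 1), if P i then hyperPmf n m k i else 0`.
  refine (sum_ite_le_exp_of_mgf_le (s := range (k + 1)) (w := hyperPmf n m k)
    (D := fun i : ℕ => k * p - i) (P := fun i : ℕ => (i : ℝ) < k * p / q)
    (fun i _ => hyperPmf_nonneg n m k i) (mul_pos (Nat.cast_pos.mpr hk1) (rho_pos hkn)) hdev
    (fun i _ hi => by rw [mul_div_assoc] at hi; linarith) (fun t _ => ?_)).trans_eq ?_
  · rw [hp, ← mul_div_assoc]; exact sum_hyperPmf_mul_exp_dev_le_rho hmn hk1 hkn t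
  · congr 1; field_simp

theorem hoeffding_serfling_underestimation (n m k : ℕ) (hn : 2 ≤ n) (hm0 : 0 < m) (hmn : m ≤ n)
    (hk1 : 1 ≤ k) (hkn : k < n) (p : ℝ) (hp : p = (m : ℝ) / n) (q : ℝ) (hq : 1 ≤ q) :
    hyperProb n m k (fun i => (i : ℝ) < k * p / q) ≤
      Real.exp (-(2 * k * (p - p / q) ^ 2) / rho n k) :=
  hoeffding_serfling_underestimation_general n m k hmn hk1 hkn p hp q hq
end
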